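/- arXiv:2106.16062 — 2 statements merged into one kernel-verified Lean document; each statement's English description precedes it below -/
import Mathlib

section
/- Let K = ℚ(ζ) be the 7th cyclotomic field with ζ a primitive 7th root of unity. Let j denote the 3×3 matrix over K equal to (-1/(2ζ^4 + 2ζ^2 + 2ζ + 1)) times the matrix with rows (ζ^5 - ζ^4, 1 - ζ^5, 1 - ζ^3), (1 - ζ^5, ζ^6 - ζ^2, 1 - ζ^6), (1 - ζ^3, 1 - ζ^6, ζ^3 - ζ). Then j has order 4 in GL_3(K), i.e., j^4 equals the identity matrix and j^2 does not equal the identity matrix. -/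
open MvPolynomial

/-- The 7th cyclotomic field `K = ℚ(ζ)`. -/
noncomputable abbrev K7 : Type := CyclotomicField 7 ℚ

/-- The matrix `j` of an order-four element of the Klein group action,
depending on a primitive 7th root of unity `ζ`. -/
noncomputable def matJ (ζ : K7) : Matrix (Fin 3) (Fin 3) K7 :=
  (-1 / (2 * ζ ^ 4 + 2 * ζ ^ 2 + 2 * ζ + 1)) •
    !![ζ ^ 5 - ζ ^ 4, 1 - ζ ^ 5, 1 - ζ ^ 3;
       1 - ζ ^ 5, ζ ^ 6 - ζ ^ 2, 1 - ζ ^ 6;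
       1 - ζ ^ 3, 1 - ζ ^ 6, ζ ^ 3 - ζ]

set_option maxHeartbeats 1600000 in
/-- The matrix `j` has order 4: `j^4 = 1` and `j^2 ≠ 1`. -/
theorem stmt6 (ζ : K7) (hζ : IsPrimitiveRoot ζ 7) :
    matJ ζ ^ 4 = 1 ∧ matJ ζ ^ 2 ≠ 1 := by
  have hs : ζ^6 + ζ^5 + ζ^4 + ζ^3 + ζ^2 + ζ + 1 = 0 := by
    have h := hζ.geom_sum_eq_zero (by norm_num)
    simp [Finset.sum_range_succ] at h
    linear_combination h
  set d : K7 := 2 * ζ ^ 4 + 2 * ζ ^ 2 + 2 * ζ + 1 with hd_def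
  have hd2 : d ^ 2 = -7 := by
    rw [hd_def]; linear_combination ((8:K7) + (-4:K7)*ζ + (4:K7)*ζ^2) * hs
  have hd : d ≠ 0 := by
    intro h; rw [h] at hd2; norm_num at hd2
  set M : Matrix (Fin 3) (Fin 3) K7 :=
    !![ζ ^ 5 - ζ ^ 4, 1 - ζ ^ 5, 1 - ζ ^ 3;
       1 - ζ ^ 5, ζ ^ 6 - ζ ^ 2, 1 - ζ ^ 6;
       1 - ζ ^ 3, 1 - ζ ^ 6, ζ ^ 3 - ζ] with hM
  set N : Matrix (Fin 3) (Fin 3) K7 :=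
    !![(1:K7) + (-3:K7)*ζ^2 + (-1:K7)*ζ^3 + (-1:K7)*ζ^4 + (-3:K7)*ζ^5, (2:K7) + (1:K7)*ζ^2 + (-2:K7)*ζ^3 + (-2:K7)*ζ^4 + (1:K7)*ζ^5, (4:K7) + (2:K7)*ζ^2 + (3:K7)*ζ^3 + (3:K7)*ζ^4 + (2:K7)*ζ^5;
       (2:K7) + (1:K7)*ζ^2 + (-2:K7)*ζ^3 + (-2:K7)*ζ^4 + (1:K7)*ζ^5, (4:K7) + (2:K7)*ζ^2 + (3:K7)*ζ^3 + (3:K7)*ζ^4 + (2:K7)*ζ^5, (1:K7) + (-3:K7)*ζ^2 + (-1:K7)*ζ^3 + (-1:K7)*ζ^4 + (-3:K7)*ζ^5;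
       (4:K7) + (2:K7)*ζ^2 + (3:K7)*ζ^3 + (3:K7)*ζ^4 + (2:K7)*ζ^5, (1:K7) + (-3:K7)*ζ^2 + (-1:K7)*ζ^3 + (-1:K7)*ζ^4 + (-3:K7)*ζ^5, (2:K7) + (1:K7)*ζ^2 + (-2:K7)*ζ^3 + (-2:K7)*ζ^4 + (1:K7)*ζ^5] with hN
  have hJ : matJ ζ = (-1 / d) • M := rfl
  have hM2 : M * M = N := by
    rw [hM, hN, Matrix.mul_fin_three]
    ext i j
    fin_cases i <;> fin_cases j <;>
      simp
    · linear_combination ((1:K7) + (-1:K7)*ζ + (3:K7)*ζ^2 + (-4:K7)*ζ^3 + (2:K7)*ζ^4) * hs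
    · linear_combination ((-1:K7) + (1:K7)*ζ + (-2:K7)*ζ^2 + (3:K7)*ζ^3 + (-1:K7)*ζ^5) * hs
    · linear_combination ((-3:K7) + (2:K7)*ζ + (-1:K7)*ζ^2 + (-1:K7)*ζ^4 + (1:K7)*ζ^5) * hs
    · linear_combination ((-1:K7) + (1:K7)*ζ + (-2:K7)*ζ^2 + (3:K7)*ζ^3 + (-1:K7)*ζ^5) * hs
    · linear_combination ((-2:K7) + (2:K7)*ζ + (-2:K7)*ζ^2 + (-1:K7)*ζ^3 + (1:K7)*ζ^4 + (-2:K7)*ζ^5 + (2:K7)*ζ^6) * hs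
    · linear_combination ((-1:K7)*ζ + (3:K7)*ζ^2 + (-1:K7)*ζ^3 + (1:K7)*ζ^5 + (-1:K7)*ζ^6) * hs
    · linear_combination ((-3:K7) + (2:K7)*ζ + (-1:K7)*ζ^2 + (-1:K7)*ζ^4 + (1:K7)*ζ^5) * hs
    · linear_combination ((-1:K7)*ζ + (3:K7)*ζ^2 + (-1:K7)*ζ^3 + (1:K7)*ζ^5 + (-1:K7)*ζ^6) * hs
    · linear_combination ((-1:K7)*ζ^5 + (1:K7)*ζ^6) * hs
  have hN2 : N * N = (49 : K7) • 1 := by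
    rw [hN, Matrix.mul_fin_three]
    ext i j
    fin_cases i <;> fin_cases j <;>
      simp [Matrix.one_apply]
    · linear_combination ((-28:K7) + (28:K7)*ζ + (14:K7)*ζ^2 + (14:K7)*ζ^4) * hs
    · linear_combination ((14:K7) + (-14:K7)*ζ + (-7:K7)*ζ^2 + (-7:K7)*ζ^4) * hs
    · linear_combination ((14:K7) + (-14:K7)*ζ + (-7:K7)*ζ^2 + (-7:K7)*ζ^4) * hs
    · linear_combination ((14:K7) + (-14:K7)*ζ + (-7:K7)*ζ^2 + (-7:K7)*ζ^4) * hs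
    · linear_combination ((-28:K7) + (28:K7)*ζ + (14:K7)*ζ^2 + (14:K7)*ζ^4) * hs
    · linear_combination ((14:K7) + (-14:K7)*ζ + (-7:K7)*ζ^2 + (-7:K7)*ζ^4) * hs
    · linear_combination ((14:K7) + (-14:K7)*ζ + (-7:K7)*ζ^2 + (-7:K7)*ζ^4) * hs
    · linear_combination ((14:K7) + (-14:K7)*ζ + (-7:K7)*ζ^2 + (-7:K7)*ζ^4) * hs
    · linear_combination ((-28:K7) + (28:K7)*ζ + (14:K7)*ζ^2 + (14:K7)*ζ^4) * hs
  constructor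
  · have hpow : M ^ 4 = (M * M) * (M * M) := by
      rw [pow_succ, pow_succ, pow_succ, pow_one, mul_assoc]
    have h4 : matJ ζ ^ 4 = ((-1 / d) ^ 4) • ((M * M) * (M * M)) := by
      rw [hJ, smul_pow, hpow]
    rw [h4, hM2, hN2, smul_smul]
    have hc : (-1 / d) ^ 4 * 49 = 1 := by
      have hd4 : d ^ 4 = 49 := by rw [show (4:ℕ) = 2 * 2 from rfl, pow_mul, hd2]; norm_num
      rw [div_pow, hd4]
      norm_num
    rw [hc, one_smul]
  · intro h
    have ht := congrArg Matrix.trace h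
    have h2 : matJ ζ ^ 2 = ((-1 / d) ^ 2) • (M * M) := by
      rw [hJ, smul_pow, sq M]
    rw [h2, hM2, Matrix.trace_smul, Matrix.trace_one] at ht
    have htr : Matrix.trace N = 7 := by
      rw [hN]
      simp [Matrix.trace_fin_three]
      linear_combination ((0:K7)) * hs
    rw [htr, smul_eq_mul] at ht
    have hc2 : (-1 / d) ^ 2 * 7 = -1 := by
      rw [div_pow, hd2]
      norm_num
    rw [hc2] at ht
    norm_num [Fintype.card_fin] at ht
end

section
/- Let K = ℚ(ζ) be the 7th cyclotomic field with ζ a primitive 7th root of unity, and let f4 = x^3*y + y^3*z + z^3*x in K[x,y,z]. Let j denote the 3×3 matrix over K equal to (-1/(2ζ^4 + 2ζ^2 + 2ζ + 1)) times the matrix with rows (ζ^5 - ζ^4, 1 - ζ^5, 1 - ζ^3), (1 - ζ^5, ζ^6 - ζ^2, 1 - ζ^6), (1 - ζ^3, 1 - ζ^6, ζ^3 - ζ). Then the K-algebra endomorphism of K[x,y,z] sending the column vector of variables (x,y,z) to j·(x,y,z) fixes f4. -/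
open MvPolynomial

/-- The Klein quartic `f4 = x^3*y + y^3*z + z^3*x` in `K[x,y,z]`. -/
noncomputable def f4 : MvPolynomial (Fin 3) K7 :=
  X 0 ^ 3 * X 1 + X 1 ^ 3 * X 2 + X 2 ^ 3 * X 0

/-- The linear substitution determined by a `3 × 3` matrix `M`, as a
`K`-algebra endomorphism of `K[x,y,z]`: each variable `x_k` is sent to the
`k`-th entry of `M·(x,y,z)ᵀ`. -/
noncomputable def matSub (M : Matrix (Fin 3) (Fin 3) K7) :
    MvPolynomial (Fin 3) K7 →ₐ[K7] MvPolynomial (Fin 3) K7 :=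
  aeval fun k => ∑ l : Fin 3, C (M k l) * X l

set_option maxHeartbeats 400000000 in
/-- The substitution by the matrix `j` fixes the Klein quartic. -/
theorem stmt9 (ζ : K7) (hζ : IsPrimitiveRoot ζ 7) :
    matSub (matJ ζ) f4 = f4 := by
  have hne : ζ - 1 ≠ 0 := sub_ne_zero.mpr (hζ.ne_one (by norm_num))
  have hgeom : ζ^6 + ζ^5 + ζ^4 + ζ^3 + ζ^2 + ζ + 1 = 0 := by
    have h7 : ζ ^ 7 = 1 := hζ.pow_eq_one
    have hm : (ζ - 1) * (ζ^6 + ζ^5 + ζ^4 + ζ^3 + ζ^2 + ζ + 1) = 0 := by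
      linear_combination h7
    rcases mul_eq_zero.mp hm with h' | h'
    · exact absurd h' hne
    · exact h'
  have hd2 : (2 * ζ ^ 4 + 2 * ζ ^ 2 + 2 * ζ + 1) ^ 2 = -7 := by
    linear_combination (4 * ζ ^ 2 - 4 * ζ + 8) * hgeom
  have hd0 : (2 * ζ ^ 4 + 2 * ζ ^ 2 + 2 * ζ + 1) ≠ 0 := by
    intro h
    rw [h] at hd2
    norm_num at hd2
  have ent : ∀ m n : K7, -m = n * (2 * ζ ^ 4 + 2 * ζ ^ 2 + 2 * ζ + 1) →
      -1 / (2 * ζ ^ 4 + 2 * ζ ^ 2 + 2 * ζ + 1) * m = n := by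
    intro m n h
    rw [div_mul_eq_mul_div, div_eq_iff hd0]
    linear_combination h
  have e00 : -1 / (2 * ζ ^ 4 + 2 * ζ ^ 2 + 2 * ζ + 1) * (ζ ^ 5 - ζ ^ 4) = (2/7 : K7) + (-2/7 : K7) * ζ + (2/7 : K7) * ζ ^ 2 + (-1/7 : K7) * ζ ^ 4 + (-1/7 : K7) * ζ ^ 5 :=
    ent _ _ (by linear_combination ((-2/7 : K7) + (2/7 : K7) * ζ ^ 3) * hgeom)
  have e01 : -1 / (2 * ζ ^ 4 + 2 * ζ ^ 2 + 2 * ζ + 1) * (1 - ζ ^ 5) = (1/7 : K7) + (4/7 : K7) * ζ + (2/7 : K7) * ζ ^ 2 + (2/7 : K7) * ζ ^ 3 + (4/7 : K7) * ζ ^ 4 + (1/7 : K7) * ζ ^ 5 :=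
    ent _ _ (by linear_combination ((-8/7 : K7) + (2/7 : K7) * ζ + (-6/7 : K7) * ζ ^ 2 + (-2/7 : K7) * ζ ^ 3) * hgeom)
  have e02 : -1 / (2 * ζ ^ 4 + 2 * ζ ^ 2 + 2 * ζ + 1) * (1 - ζ ^ 3) = (-1/7 : K7) + (2/7 : K7) * ζ + (2/7 : K7) * ζ ^ 2 + (-1/7 : K7) * ζ ^ 3 + (-2/7 : K7) * ζ ^ 5 :=
    ent _ _ (by linear_combination ((-6/7 : K7) + (6/7 : K7) * ζ + (-4/7 : K7) * ζ ^ 2 + (4/7 : K7) * ζ ^ 3) * hgeom)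
  have e10 : -1 / (2 * ζ ^ 4 + 2 * ζ ^ 2 + 2 * ζ + 1) * (1 - ζ ^ 5) = (1/7 : K7) + (4/7 : K7) * ζ + (2/7 : K7) * ζ ^ 2 + (2/7 : K7) * ζ ^ 3 + (4/7 : K7) * ζ ^ 4 + (1/7 : K7) * ζ ^ 5 :=
    ent _ _ (by linear_combination ((-8/7 : K7) + (2/7 : K7) * ζ + (-6/7 : K7) * ζ ^ 2 + (-2/7 : K7) * ζ ^ 3) * hgeom)
  have e11 : -1 / (2 * ζ ^ 4 + 2 * ζ ^ 2 + 2 * ζ + 1) * (ζ ^ 6 - ζ ^ 2) = (3/7 : K7) + (3/7 : K7) * ζ + (1/7 : K7) * ζ ^ 3 + (-1/7 : K7) * ζ ^ 4 + (1/7 : K7) * ζ ^ 5 :=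
    ent _ _ (by linear_combination ((-3/7 : K7) + (-6/7 : K7) * ζ + (4/7 : K7) * ζ ^ 2 + (-2/7 : K7) * ζ ^ 3) * hgeom)
  have e12 : -1 / (2 * ζ ^ 4 + 2 * ζ ^ 2 + 2 * ζ + 1) * (1 - ζ ^ 6) = (1/7 : K7) * ζ + (3/7 : K7) * ζ ^ 2 + (-1/7 : K7) * ζ ^ 3 + (3/7 : K7) * ζ ^ 4 + (1/7 : K7) * ζ ^ 5 :=
    ent _ _ (by linear_combination ((-1 : K7) + (6/7 : K7) * ζ + (-4/7 : K7) * ζ ^ 2 + (-2/7 : K7) * ζ ^ 3) * hgeom)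
  have e20 : -1 / (2 * ζ ^ 4 + 2 * ζ ^ 2 + 2 * ζ + 1) * (1 - ζ ^ 3) = (-1/7 : K7) + (2/7 : K7) * ζ + (2/7 : K7) * ζ ^ 2 + (-1/7 : K7) * ζ ^ 3 + (-2/7 : K7) * ζ ^ 5 :=
    ent _ _ (by linear_combination ((-6/7 : K7) + (6/7 : K7) * ζ + (-4/7 : K7) * ζ ^ 2 + (4/7 : K7) * ζ ^ 3) * hgeom)
  have e21 : -1 / (2 * ζ ^ 4 + 2 * ζ ^ 2 + 2 * ζ + 1) * (1 - ζ ^ 6) = (1/7 : K7) * ζ + (3/7 : K7) * ζ ^ 2 + (-1/7 : K7) * ζ ^ 3 + (3/7 : K7) * ζ ^ 4 + (1/7 : K7) * ζ ^ 5 :=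
    ent _ _ (by linear_combination ((-1 : K7) + (6/7 : K7) * ζ + (-4/7 : K7) * ζ ^ 2 + (-2/7 : K7) * ζ ^ 3) * hgeom)
  have e22 : -1 / (2 * ζ ^ 4 + 2 * ζ ^ 2 + 2 * ζ + 1) * (ζ ^ 3 - ζ) = (2/7 : K7) + (-1/7 : K7) * ζ + (-2/7 : K7) * ζ ^ 2 + (-1/7 : K7) * ζ ^ 3 + (2/7 : K7) * ζ ^ 4 :=
    ent _ _ (by linear_combination ((-2/7 : K7) + (6/7 : K7) * ζ + (-4/7 : K7) * ζ ^ 2) * hgeom)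
  apply MvPolynomial.funext
  intro v
  simp only [matSub, matJ, f4, map_add, map_mul, map_pow, aeval_X, Fin.sum_univ_three,
    Matrix.smul_apply, Matrix.cons_val', Matrix.cons_val_zero, Matrix.cons_val_one,
    Matrix.cons_val_two, Matrix.tail_cons,
    Matrix.head_cons, Matrix.head_fin_const, Matrix.empty_val', Matrix.cons_val_fin_one,
    Matrix.of_apply, smul_eq_mul, eval_add, eval_mul, eval_pow, eval_C, eval_X]
  rw [e00, e01, e02, e11, e12, e22]
  linear_combination ((-8/2401 : K7) * v 2 ^ 4 + (5/2401 : K7) * v 1 * v 2 ^ 3 + (9/2401 : K7) * v 1 ^ 2 * v 2 ^ 2 + (-2356/2401 : K7) * v 1 ^ 3 * v 2 + (3/2401 : K7) * v 1 ^ 4 + (-2374/2401 : K7) * v 0 * v 2 ^ 3 + (9/2401 : K7) * v 0 * v 1 * v 2 ^ 2 + (15/2401 : K7) * v 0 * v 1 ^ 2 * v 2 + (-8/2401 : K7) * v 0 * v 1 ^ 3 + (-24/2401 : K7) * v 0 ^ 2 * v 2 ^ 2 + (-24/2401 : K7) * v 0 ^ 2 * v 1 * v 2 + (15/2401 : K7)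 * v 0 ^ 2 * v 1 ^ 2 + (3/2401 : K7) * v 0 ^ 3 * v 2 + (-2375/2401 : K7) * v 0 ^ 3 * v 1 + (5/2401 : K7) * v 0 ^ 4 + (5/343 : K7) * ζ * v 2 ^ 4 + (3/343 : K7) * ζ * v 1 * v 2 ^ 3 + (9/343 : K7) * ζ * v 1 ^ 2 * v 2 ^ 2 + (347/343 : K7) * ζ * v 1 ^ 3 * v 2 + (9/343 : K7) * ζ * v 1 ^ 4 + (326/343 : K7) * ζ * v 0 * v 2 ^ 3 + (-3/343 : K7) * ζ * v 0 * v 1 * v 2 ^ 2 + (3/49 : K7) * ζ * v 0 * v 1 ^ 2 * v 2 + (24/343 : K7) * ζ * v 0 * v 1 ^ 3 + (3/49 : K7) * ζ * v 0 ^ 2 * v 2 ^ 2 + (27/343 : K7) * ζ * v 0 ^ 2 * v 1 * v 2 + (9/343 : K7) * ζ * v 0 ^ 2 * v 1 ^ 2 + (-1/49 : K7) * ζ * v 0 ^ 3 * v 2 + (335/343 : K7) * ζ * v 0 ^ 3 * v 1 + (1/343 : K7) * ζ * v 0 ^ 4 + (-2/343 : K7) * ζ ^ 2 * v 2 ^ 4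 + (-1/49 : K7) * ζ ^ 2 * v 1 * v 2 ^ 3 + (12/343 : K7) * ζ ^ 2 * v 1 ^ 2 * v 2 ^ 2 + (-10/343 : K7) * ζ ^ 2 * v 1 ^ 3 * v 2 + (6/49 : K7) * ζ ^ 2 * v 1 ^ 4 + (19/343 : K7) * ζ ^ 2 * v 0 * v 2 ^ 3 + (48/343 : K7) * ζ ^ 2 * v 0 * v 1 * v 2 ^ 2 + (54/343 : K7) * ζ ^ 2 * v 0 * v 1 ^ 2 * v 2 + (97/343 : K7) * ζ ^ 2 * v 0 * v 1 ^ 3 + (-33/343 : K7) * ζ ^ 2 * v 0 ^ 2 * v 2 ^ 2 + (18/343 : K7) * ζ ^ 2 * v 0 ^ 2 * v 1 * v 2 + (48/343 : K7) * ζ ^ 2 * v 0 ^ 2 * v 1 ^ 2 + (45/343 : K7) * ζ ^ 2 * v 0 ^ 3 * v 2 + (19/343 : K7) * ζ ^ 2 * v 0 ^ 3 * v 1 + (-2/49 : K7) * ζ ^ 2 * v 0 ^ 4 + (-11/343 : K7) * ζ ^ 3 * v 2 ^ 4 + (13/343 : K7) * ζ ^ 3 * v 1 * v 2 ^ 3 +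 (-18/343 : K7) * ζ ^ 3 * v 1 ^ 2 * v 2 ^ 2 + (10/49 : K7) * ζ ^ 3 * v 1 ^ 3 * v 2 + (65/343 : K7) * ζ ^ 3 * v 1 ^ 4 + (22/343 : K7) * ζ ^ 3 * v 0 * v 2 ^ 3 + (6/343 : K7) * ζ ^ 3 * v 0 * v 1 * v 2 ^ 2 + (57/343 : K7) * ζ ^ 3 * v 0 * v 1 ^ 2 * v 2 + (18/49 : K7) * ζ ^ 3 * v 0 * v 1 ^ 3 + (36/343 : K7) * ζ ^ 3 * v 0 ^ 2 * v 2 ^ 2 + (96/343 : K7) * ζ ^ 3 * v 0 ^ 2 * v 1 * v 2 + (180/343 : K7) * ζ ^ 3 * v 0 ^ 2 * v 1 ^ 2 + (-31/343 : K7) * ζ ^ 3 * v 0 ^ 3 * v 2 + (27/343 : K7) * ζ ^ 3 * v 0 ^ 3 * v 1 + (27/343 : K7) * ζ ^ 3 * v 0 ^ 4 + (-3/343 : K7) * ζ ^ 4 * v 2 ^ 4 + (-2/343 : K7) * ζ ^ 4 * v 1 * v 2 ^ 3 + (3/49 : K7) * ζ ^ 4 * v 1 ^ 2 * v 2 ^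 2 + (20/49 : K7) * ζ ^ 4 * v 1 ^ 3 * v 2 + (52/343 : K7) * ζ ^ 4 * v 1 ^ 4 + (6/343 : K7) * ζ ^ 4 * v 0 * v 2 ^ 3 + (3/49 : K7) * ζ ^ 4 * v 0 * v 1 * v 2 ^ 2 + (3/7 : K7) * ζ ^ 4 * v 0 * v 1 ^ 2 * v 2 + (139/343 : K7) * ζ ^ 4 * v 0 * v 1 ^ 3 + (33/343 : K7) * ζ ^ 4 * v 0 ^ 2 * v 2 ^ 2 + (12/343 : K7) * ζ ^ 4 * v 0 ^ 2 * v 1 * v 2 + (123/343 : K7) * ζ ^ 4 * v 0 ^ 2 * v 1 ^ 2 + (20/343 : K7) * ζ ^ 4 * v 0 ^ 3 * v 2 + (155/343 : K7) * ζ ^ 4 * v 0 ^ 3 * v 1 + (4/343 : K7) * ζ ^ 4 * v 0 ^ 4 + (37/343 : K7) * ζ ^ 5 * v 2 ^ 4 + (8/343 : K7) * ζ ^ 5 * v 1 * v 2 ^ 3 + (120/343 : K7) * ζ ^ 5 * v 1 ^ 2 * v 2 ^ 2 + (45/343 : K7) * ζ ^ 5 * v 1 ^ 3 * v 2 + (87/343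 : K7) * ζ ^ 5 * v 1 ^ 4 + (-89/343 : K7) * ζ ^ 5 * v 0 * v 2 ^ 3 + (27/343 : K7) * ζ ^ 5 * v 0 * v 1 * v 2 ^ 2 + (144/343 : K7) * ζ ^ 5 * v 0 * v 1 ^ 2 * v 2 + (188/343 : K7) * ζ ^ 5 * v 0 * v 1 ^ 3 + (45/343 : K7) * ζ ^ 5 * v 0 ^ 2 * v 2 ^ 2 + (114/343 : K7) * ζ ^ 5 * v 0 ^ 2 * v 1 * v 2 + (117/343 : K7) * ζ ^ 5 * v 0 ^ 2 * v 1 ^ 2 + (45/343 : K7) * ζ ^ 5 * v 0 ^ 3 * v 2 + (9/343 : K7) * ζ ^ 5 * v 0 ^ 3 * v 1 + (13/343 : K7) * ζ ^ 5 * v 0 ^ 4 + (9/343 : K7) * ζ ^ 6 * v 2 ^ 4 + (34/343 : K7) * ζ ^ 6 * v 1 * v 2 ^ 3 + (-39/343 : K7) * ζ ^ 6 * v 1 ^ 2 * v 2 ^ 2 + (157/343 : K7) * ζ ^ 6 * v 1 ^ 3 * v 2 + (102/343 : K7) * ζ ^ 6 * v 1 ^ 4 + (45/343 : K7) * ζ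 ^ 6 * v 0 * v 2 ^ 3 + (90/343 : K7) * ζ ^ 6 * v 0 * v 1 * v 2 ^ 2 + (165/343 : K7) * ζ ^ 6 * v 0 * v 1 ^ 2 * v 2 + (20/49 : K7) * ζ ^ 6 * v 0 * v 1 ^ 3 + (-39/343 : K7) * ζ ^ 6 * v 0 ^ 2 * v 2 ^ 2 + (90/343 : K7) * ζ ^ 6 * v 0 ^ 2 * v 1 * v 2 + (195/343 : K7) * ζ ^ 6 * v 0 ^ 2 * v 1 ^ 2 + (-2/343 : K7) * ζ ^ 6 * v 0 ^ 3 * v 2 + (15/343 : K7) * ζ ^ 6 * v 0 ^ 3 * v 1 + (32/343 : K7) * ζ ^ 6 * v 0 ^ 4 + (-425/2401 : K7) * ζ ^ 7 * v 2 ^ 4 + (-108/2401 : K7) * ζ ^ 7 * v 1 * v 2 ^ 3 + (423/2401 : K7) * ζ ^ 7 * v 1 ^ 2 * v 2 ^ 2 + (-972/2401 : K7) * ζ ^ 7 * v 1 ^ 3 * v 2 + (288/2401 : K7) * ζ ^ 7 * v 1 ^ 4 + (-1034/2401 : K7) * ζ ^ 7 * v 0 * v 2 ^ 3 + (-459/2401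 : K7) * ζ ^ 7 * v 0 * v 1 * v 2 ^ 2 + (852/2401 : K7) * ζ ^ 7 * v 0 * v 1 ^ 2 * v 2 + (800/2401 : K7) * ζ ^ 7 * v 0 * v 1 ^ 3 + (-834/2401 : K7) * ζ ^ 7 * v 0 ^ 2 * v 2 ^ 2 + (-687/2401 : K7) * ζ ^ 7 * v 0 ^ 2 * v 1 * v 2 + (117/2401 : K7) * ζ ^ 7 * v 0 ^ 2 * v 1 ^ 2 + (92/2401 : K7) * ζ ^ 7 * v 0 ^ 3 * v 2 + (-444/2401 : K7) * ζ ^ 7 * v 0 ^ 3 * v 1 + (88/2401 : K7) * ζ ^ 7 * v 0 ^ 4 + (23/343 : K7) * ζ ^ 8 * v 2 ^ 4 + (-24/343 : K7) * ζ ^ 8 * v 1 * v 2 ^ 3 + (96/343 : K7) * ζ ^ 8 * v 1 ^ 2 * v 2 ^ 2 + (164/343 : K7) * ζ ^ 8 * v 1 ^ 3 * v 2 + (47/343 : K7) * ζ ^ 8 * v 1 ^ 4 + (129/343 : K7) * ζ ^ 8 * v 0 * v 2 ^ 3 + (-18/343 : K7) * ζ ^ 8 * v 0 * v 1 * v 2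 ^ 2 + (12/49 : K7) * ζ ^ 8 * v 0 * v 1 ^ 2 * v 2 + (179/343 : K7) * ζ ^ 8 * v 0 * v 1 ^ 3 + (18/49 : K7) * ζ ^ 8 * v 0 ^ 2 * v 2 ^ 2 + (141/343 : K7) * ζ ^ 8 * v 0 ^ 2 * v 1 * v 2 + (-9/343 : K7) * ζ ^ 8 * v 0 ^ 2 * v 1 ^ 2 + (5/49 : K7) * ζ ^ 8 * v 0 ^ 3 * v 2 + (71/343 : K7) * ζ ^ 8 * v 0 ^ 3 * v 1 + (6/343 : K7) * ζ ^ 8 * v 0 ^ 4 + (-12/343 : K7) * ζ ^ 9 * v 2 ^ 4 + (-2/49 : K7) * ζ ^ 9 * v 1 * v 2 ^ 3 + (-75/343 : K7) * ζ ^ 9 * v 1 ^ 2 * v 2 ^ 2 + (-11/343 : K7) * ζ ^ 9 * v 1 ^ 3 * v 2 + (8/49 : K7) * ζ ^ 9 * v 1 ^ 4 + (-40/343 : K7) * ζ ^ 9 * v 0 * v 2 ^ 3 + (57/343 : K7) * ζ ^ 9 * v 0 * v 1 * v 2 ^ 2 + (-96/343 : K7) * ζ ^ 9 * v 0 * v 1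 ^ 2 * v 2 + (15/343 : K7) * ζ ^ 9 * v 0 * v 1 ^ 3 + (-93/343 : K7) * ζ ^ 9 * v 0 ^ 2 * v 2 ^ 2 + (24/343 : K7) * ζ ^ 9 * v 0 ^ 2 * v 1 * v 2 + (-48/343 : K7) * ζ ^ 9 * v 0 ^ 2 * v 1 ^ 2 + (-73/343 : K7) * ζ ^ 9 * v 0 ^ 3 * v 2 + (23/343 : K7) * ζ ^ 9 * v 0 ^ 3 * v 1 + (-4/49 : K7) * ζ ^ 9 * v 0 ^ 4 + (18/343 : K7) * ζ ^ 10 * v 2 ^ 4 + (22/343 : K7) * ζ ^ 10 * v 1 * v 2 ^ 3 + (18/343 : K7) * ζ ^ 10 * v 1 ^ 2 * v 2 ^ 2 + (2/49 : K7) * ζ ^ 10 * v 1 ^ 3 * v 2 + (5/343 : K7) * ζ ^ 10 * v 1 ^ 4 + (20/343 : K7) * ζ ^ 10 * v 0 * v 2 ^ 3 + (15/343 : K7) * ζ ^ 10 * v 0 * v 1 * v 2 ^ 2 + (69/343 : K7) * ζ ^ 10 * v 0 * v 1 ^ 2 * v 2 + (8/49 : K7) * ζ ^ 10 * v 0 *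 v 1 ^ 3 + (48/343 : K7) * ζ ^ 10 * v 0 ^ 2 * v 2 ^ 2 + (9/343 : K7) * ζ ^ 10 * v 0 ^ 2 * v 1 * v 2 + (-12/343 : K7) * ζ ^ 10 * v 0 ^ 2 * v 1 ^ 2 + (24/343 : K7) * ζ ^ 10 * v 0 ^ 3 * v 2 + (43/343 : K7) * ζ ^ 10 * v 0 ^ 3 * v 1 + (-13/343 : K7) * ζ ^ 10 * v 0 ^ 4 + (-4/343 : K7) * ζ ^ 11 * v 2 ^ 4 + (2/343 : K7) * ζ ^ 11 * v 1 * v 2 ^ 3 + (-3/49 : K7) * ζ ^ 11 * v 1 ^ 2 * v 2 ^ 2 + (1/7 : K7) * ζ ^ 11 * v 1 ^ 3 * v 2 + (18/343 : K7) * ζ ^ 11 * v 1 ^ 4 + (1/343 : K7) * ζ ^ 11 * v 0 * v 2 ^ 3 + (-18/49 : K7) * ζ ^ 11 * v 0 * v 1 ^ 2 * v 2 + (29/343 : K7) * ζ ^ 11 * v 0 * v 1 ^ 3 + (9/343 : K7) * ζ ^ 11 * v 0 ^ 2 * v 2 ^ 2 + (51/343 : K7) * ζ ^ 11 * v 0 ^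 2 * v 1 * v 2 + (-60/343 : K7) * ζ ^ 11 * v 0 ^ 2 * v 1 ^ 2 + (-27/343 : K7) * ζ ^ 11 * v 0 ^ 3 * v 2 + (41/343 : K7) * ζ ^ 11 * v 0 ^ 3 * v 1 + (-25/343 : K7) * ζ ^ 11 * v 0 ^ 4 + (5/343 : K7) * ζ ^ 12 * v 2 ^ 4 + (13/343 : K7) * ζ ^ 12 * v 1 * v 2 ^ 3 + (-36/343 : K7) * ζ ^ 12 * v 1 ^ 2 * v 2 ^ 2 + (4/343 : K7) * ζ ^ 12 * v 1 ^ 3 * v 2 + (11/343 : K7) * ζ ^ 12 * v 1 ^ 4 + (12/343 : K7) * ζ ^ 12 * v 0 * v 2 ^ 3 + (78/343 : K7) * ζ ^ 12 * v 0 * v 1 * v 2 ^ 2 + (-60/343 : K7) * ζ ^ 12 * v 0 * v 1 ^ 2 * v 2 + (-20/343 : K7) * ζ ^ 12 * v 0 * v 1 ^ 3 + (-3/343 : K7) * ζ ^ 12 * v 0 ^ 2 * v 2 ^ 2 + (96/343 : K7) * ζ ^ 12 * v 0 ^ 2 * v 1 * v 2 + (9/343 : K7) * ζ ^ 12 * v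 0 ^ 2 * v 1 ^ 2 + (-24/343 : K7) * ζ ^ 12 * v 0 ^ 3 * v 2 + (19/343 : K7) * ζ ^ 12 * v 0 ^ 3 * v 1 + (-13/343 : K7) * ζ ^ 12 * v 0 ^ 4 + (-2/343 : K7) * ζ ^ 13 * v 2 ^ 4 + (15/343 : K7) * ζ ^ 13 * v 1 * v 2 ^ 3 + (-3/343 : K7) * ζ ^ 13 * v 1 ^ 2 * v 2 ^ 2 + (-3/343 : K7) * ζ ^ 13 * v 1 ^ 3 * v 2 + (3/343 : K7) * ζ ^ 13 * v 1 ^ 4 + (-10/343 : K7) * ζ ^ 13 * v 0 * v 2 ^ 3 + (36/343 : K7) * ζ ^ 13 * v 0 * v 1 * v 2 ^ 2 + (3/343 : K7) * ζ ^ 13 * v 0 * v 1 ^ 2 * v 2 + (-1/49 : K7) * ζ ^ 13 * v 0 * v 1 ^ 3 + (-24/343 : K7) * ζ ^ 13 * v 0 ^ 2 * v 2 ^ 2 + (15/343 : K7) * ζ ^ 13 * v 0 ^ 2 * v 1 * v 2 + (15/343 : K7) * ζ ^ 13 * v 0 ^ 2 * v 1 ^ 2 + (-19/343 : K7) * ζ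 ^ 13 * v 0 ^ 3 * v 2 + (-8/343 : K7) * ζ ^ 13 * v 0 ^ 3 * v 1 + (-4/343 : K7) * ζ ^ 13 * v 0 ^ 4 + (-8/2401 : K7) * ζ ^ 14 * v 2 ^ 4 + (5/2401 : K7) * ζ ^ 14 * v 1 * v 2 ^ 3 + (9/2401 : K7) * ζ ^ 14 * v 1 ^ 2 * v 2 ^ 2 + (-4/2401 : K7) * ζ ^ 14 * v 1 ^ 3 * v 2 + (3/2401 : K7) * ζ ^ 14 * v 1 ^ 4 + (-22/2401 : K7) * ζ ^ 14 * v 0 * v 2 ^ 3 + (9/2401 : K7) * ζ ^ 14 * v 0 * v 1 * v 2 ^ 2 + (15/2401 : K7) * ζ ^ 14 * v 0 * v 1 ^ 2 * v 2 + (-8/2401 : K7) * ζ ^ 14 * v 0 * v 1 ^ 3 + (-24/2401 : K7) * ζ ^ 14 * v 0 ^ 2 * v 2 ^ 2 + (-24/2401 : K7) * ζ ^ 14 * v 0 ^ 2 * v 1 * v 2 + (15/2401 : K7) * ζ ^ 14 * v 0 ^ 2 * v 1 ^ 2 + (3/2401 : K7) * ζ ^ 14 * v 0 ^ 3 * v 2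 + (-23/2401 : K7) * ζ ^ 14 * v 0 ^ 3 * v 1 + (5/2401 : K7) * ζ ^ 14 * v 0 ^ 4) * hgeom
end
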